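/- Let α be a power-multiplicative seminorm on a perfect F_p-algebra R and for t > 0 let ‖x‖_t = sup_n p^{−n} α(x̄ₙ)^t for x = Σ pⁿ[x̄ₙ]. Then for any fixed x the function t ↦ ‖x‖_t is log-convex in t: for 0 < s ≤ t ≤ r with t = λs + (1−λ)r, λ ∈ [0,1], one has ‖x‖_t ≤ ‖x‖_s^λ · ‖x‖_r^{1−λ}, provided ‖x‖_s and ‖x‖_r are finite. -/
import Mathlib


/-- Log-convexity of the Gauss norms `t ↦ ‖x‖_t = sup_n p^{-n} α(x̄ₙ)^t` on
Witt-vector Robba rings, in terms of the coefficient sequence `c n = α(x̄ₙ)`: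
for `0 < s ≤ t ≤ r` with `t = λ·s + (1-λ)·r`, `λ ∈ [0,1]`, and both `‖x‖_s`
and `‖x‖_r` finite, one has `‖x‖_t ≤ ‖x‖_s^λ · ‖x‖_r^{1-λ}`. -/
theorem gauss_norm_log_convex
    {p : ℕ} (hp : p.Prime) (c : ℤ → ℝ) (hc : ∀ n, 0 ≤ c n)
    (s r t lam : ℝ) (hs : 0 < s) (hst : s ≤ t) (htr : t ≤ r)
    (hlam : lam ∈ Set.Icc (0 : ℝ) 1) (ht : t = lam * s + (1 - lam) * r)
    (hbs : BddAbove (Set.range fun n : ℤ => (p : ℝ) ^ (-(n : ℝ)) * c n ^ s))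
    (hbr : BddAbove (Set.range fun n : ℤ => (p : ℝ) ^ (-(n : ℝ)) * c n ^ r)) :
    (⨆ n : ℤ, (p : ℝ) ^ (-(n : ℝ)) * c n ^ t) ≤
      (⨆ n : ℤ, (p : ℝ) ^ (-(n : ℝ)) * c n ^ s) ^ lam *
        (⨆ n : ℤ, (p : ℝ) ^ (-(n : ℝ)) * c n ^ r) ^ (1 - lam) := by
  obtain ⟨hl0, hl1⟩ := hlam
  have hp0 : (0 : ℝ) < p := by exact_mod_cast hp.pos
  have ht0 : 0 < t := lt_of_lt_of_le hs hst
  have hSnn : 0 ≤ ⨆ n : ℤ, (p : ℝ) ^ (-(n : ℝ)) * c n ^ s :=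
    Real.iSup_nonneg fun n => mul_nonneg (Real.rpow_pos_of_pos hp0 _).le
      (Real.rpow_nonneg (hc n) _)
  have hRnn : 0 ≤ ⨆ n : ℤ, (p : ℝ) ^ (-(n : ℝ)) * c n ^ r :=
    Real.iSup_nonneg fun n => mul_nonneg (Real.rpow_pos_of_pos hp0 _).le
      (Real.rpow_nonneg (hc n) _)
  refine ciSup_le fun n => ?_
  have hq : (0 : ℝ) < (p : ℝ) ^ (-(n : ℝ)) := Real.rpow_pos_of_pos hp0 _
  have key : (p : ℝ) ^ (-(n : ℝ)) * c n ^ t =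
      ((p : ℝ) ^ (-(n : ℝ)) * c n ^ s) ^ lam *
        ((p : ℝ) ^ (-(n : ℝ)) * c n ^ r) ^ (1 - lam) := by
    rw [Real.mul_rpow hq.le (Real.rpow_nonneg (hc n) _),
      Real.mul_rpow hq.le (Real.rpow_nonneg (hc n) _)]
    rw [mul_mul_mul_comm, ← Real.rpow_add hq, ← Real.rpow_mul (hc n), ← Real.rpow_mul (hc n),
      ← Real.rpow_add' (hc n) (by rw [mul_comm s lam, mul_comm r (1 - lam), ← ht]; exact ht0.ne'),
      add_sub_cancel, Real.rpow_one]
    congr 1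
    rw [ht]; ring
  rw [key]
  have h1 : (p : ℝ) ^ (-(n : ℝ)) * c n ^ s ≤ ⨆ m : ℤ, (p : ℝ) ^ (-(m : ℝ)) * c m ^ s :=
    le_ciSup hbs n
  have h2 : (p : ℝ) ^ (-(n : ℝ)) * c n ^ r ≤ ⨆ m : ℤ, (p : ℝ) ^ (-(m : ℝ)) * c m ^ r :=
    le_ciSup hbr n
  exact mul_le_mul (Real.rpow_le_rpow (mul_nonneg hq.le (Real.rpow_nonneg (hc n) _)) h1 hl0)
    (Real.rpow_le_rpow (mul_nonneg hq.le (Real.rpow_nonneg (hc n) _)) h2 (by linarith))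
    (Real.rpow_nonneg (mul_nonneg hq.le (Real.rpow_nonneg (hc n) _)) _)
    (Real.rpow_nonneg hSnn _)
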